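/- Let N ≥ 1 and let x, y : Fin N → EuclideanSpace ℝ (Fin 3) be two point clouds. Then PM(x,y) ≤ √2 · RMSD(x,y), where PM(x,y) and RMSD(x,y) denote the (nonnegative) square roots of the squared Packing Matching score and squared RMSD respectively. -/

import Mathlib

/-!
Put `d i = x i - y i`. By the reverse triangle inequality each pairwise term is bounded by
`‖d i - d j‖²`, and expanding the square gives
`∑ i, ∑ j, ‖d i - d j‖² = 2N ∑ i, ‖d i‖² - 2 ‖∑ i, d i‖² ≤ 2N ∑ i, ‖d i‖²`.
Dividing by `N²` yields `PM² ≤ 2 RMSD²`.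
-/

open Finset

theorem inv_sq_mul_self {G₀ : Type*} [CommGroupWithZero G₀] (a : G₀) : (a ^ 2)⁻¹ * a = a⁻¹ := by
  rw [sq, mul_inv, mul_right_comm]
  simpa using mul_inv_mul_cancel a⁻¹

theorem sq_norm_sub_norm_le {E : Type*} [SeminormedAddCommGroup E] (u v : E) :
    (‖u‖ - ‖v‖) ^ 2 ≤ ‖u - v‖ ^ 2 := by
  simpa only [sq_abs] using pow_le_pow_left₀ (abs_nonneg _) (abs_norm_sub_norm_le u v) 2

section InnerProductSpace

variable {ι F : Type*} [Fintype ι] [NormedAddCommGroup F] [InnerProductSpace ℝ F]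

theorem sum_sum_norm_sub_sq (d : ι → F) :
    ∑ i, ∑ j, ‖d i - d j‖ ^ 2 =
      2 * Fintype.card ι * ∑ i, ‖d i‖ ^ 2 - 2 * ‖∑ i, d i‖ ^ 2 := by
  have hinner : ∑ i, ∑ j, inner ℝ (d i) (d j) = ‖∑ i, d i‖ ^ 2 := by
    rw [← real_inner_self_eq_norm_sq, sum_inner]
    simp only [inner_sum]
  simp only [norm_sub_sq_real, sum_sub_distrib, sum_add_distrib, sum_const, card_univ,
    nsmul_eq_mul, ← mul_sum, hinner]
  ring

theorem sum_sum_norm_sub_sq_le (d : ι → F) :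
    ∑ i, ∑ j, ‖d i - d j‖ ^ 2 ≤ 2 * Fintype.card ι * ∑ i, ‖d i‖ ^ 2 := by
  rw [sum_sum_norm_sub_sq]
  linarith [sq_nonneg ‖∑ i, d i‖]

theorem sum_sum_sq_norm_sub_sub_norm_sub_le (x y : ι → F) :
    ∑ i, ∑ j, (‖x i - x j‖ - ‖y i - y j‖) ^ 2 ≤
      2 * Fintype.card ι * ∑ i, ‖x i - y i‖ ^ 2 :=
  calc ∑ i, ∑ j, (‖x i - x j‖ - ‖y i - y j‖) ^ 2
      ≤ ∑ i, ∑ j, ‖(x i - y i) - (x j - y j)‖ ^ 2 := by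
        refine sum_le_sum fun i _ => sum_le_sum fun j _ => ?_
        rw [sub_sub_sub_comm]
        exact sq_norm_sub_norm_le _ _
    _ ≤ 2 * Fintype.card ι * ∑ i, ‖x i - y i‖ ^ 2 := sum_sum_norm_sub_sq_le _

end InnerProductSpace

theorem pm_le_sqrt_two_mul_rmsd_general (N : ℕ)
    (x y : Fin N → EuclideanSpace ℝ (Fin 3)) :
    Real.sqrt ((1 / (N : ℝ) ^ 2) * ∑ i, ∑ j, (‖x i - x j‖ - ‖y i - y j‖) ^ 2) ≤
      Real.sqrt 2 * Real.sqrt ((1 / (N : ℝ)) * ∑ i, ‖x i - y i‖ ^ 2) := by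
  rw [← Real.sqrt_mul zero_le_two]
  refine Real.sqrt_le_sqrt ?_
  have hbound := sum_sum_sq_norm_sub_sub_norm_sub_le x y
  rw [Fintype.card_fin] at hbound
  calc (1 / (N : ℝ) ^ 2) * ∑ i, ∑ j, (‖x i - x j‖ - ‖y i - y j‖) ^ 2
      ≤ (1 / (N : ℝ) ^ 2) * (2 * N * ∑ i, ‖x i - y i‖ ^ 2) := by gcongr
    _ = 2 * ((1 / (N : ℝ)) * ∑ i, ‖x i - y i‖ ^ 2) := by
      rw [one_div, one_div, ← inv_sq_mul_self (N : ℝ)]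
      ring

/-- For point clouds `x, y : Fin N → EuclideanSpace ℝ (Fin 3)` with `N ≥ 1`,
the Packing Matching score is at most `√2` times the RMSD:
`PM(x,y) ≤ √2 · RMSD(x,y)`. -/
theorem pm_le_sqrt_two_mul_rmsd (N : ℕ) (hN : 1 ≤ N)
    (x y : Fin N → EuclideanSpace ℝ (Fin 3)) :
    Real.sqrt ((1 / (N : ℝ) ^ 2) * ∑ i, ∑ j, (‖x i - x j‖ - ‖y i - y j‖) ^ 2) ≤
      Real.sqrt 2 * Real.sqrt ((1 / (N : ℝ)) * ∑ i, ‖x i - y i‖ ^ 2) :=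
  pm_le_sqrt_two_mul_rmsd_general N x y
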